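/- arXiv:2403.17142 — 2 statements merged into one kernel-verified Lean document; each statement's English description precedes it below -/
import Mathlib

section
/- If f : ℝⁿ → ℝ satisfies |f̂(ω)|(1+‖ω‖^k) ≤ ρ for all ω with k ≥ n+3, then f is Lipschitz with constant at most 4π A_{n-1} ρ and ‖f‖_∞ ≤ 2ρ A_{n-1}. -/
open MeasureTheory Real Set Module Metric
open scoped FourierTransform RealInnerProductSpace

/-! By Fourier inversion, `f x = ∫ 𝐞 ⟪ω, x⟫ f̂ ω dω`. The decay hypothesis dominates
`‖ω‖ ^ m ‖f̂ ω‖` (`m = 0, 1`) by `ρ ‖ω‖ ^ m / (1 + ‖ω‖ ^ k)`, whose integral is, in polar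
coordinates, `ρ A_{n-1} ∫₀^∞ r ^ (n - 1 + m) / (1 + r ^ k) dr ≤ 2 ρ A_{n-1}`: split the radial
integral at `r = 1`, where the integrand is bounded by `1` and by `r ^ (-2)` respectively. The case
`m = 0` gives the sup bound; the case `m = 1`, with `‖𝐞 a - 𝐞 b‖ ≤ 2π |a - b|`, gives the
Lipschitz bound. -/

section Radial
variable {j k : ℕ}

theorem pow_div_one_add_pow_le_one {y : ℝ} (hy₀ : 0 ≤ y) (hy₁ : y ≤ 1) :
    y ^ j / (1 + y ^ k) ≤ 1 :=
  div_le_one_of_le₀ ((pow_le_one₀ hy₀ hy₁).trans (le_add_of_nonneg_right (by positivity)))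
    (by positivity)

theorem pow_div_one_add_pow_le_rpow_neg_two (hjk : j + 2 ≤ k) {y : ℝ} (hy : 1 ≤ y) :
    y ^ j / (1 + y ^ k) ≤ y ^ (-2 : ℝ) := by
  have hy₀ : 0 < y := one_pos.trans_le hy
  rw [rpow_neg hy₀.le, rpow_two, div_le_iff₀ (by positivity), inv_mul_eq_div,
    le_div_iff₀ (by positivity), ← pow_add]
  linarith [pow_le_pow_right₀ hy hjk]

theorem integrableOn_Ioc_pow_div_one_add_pow :
    IntegrableOn (fun y : ℝ => y ^ j / (1 + y ^ k)) (Ioc 0 1) := by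
  refine Measure.integrableOn_of_bounded (M := 1) (by simp)
    (by fun_prop : Measurable _).aestronglyMeasurable ?_
  filter_upwards [ae_restrict_mem measurableSet_Ioc] with y hy
  rw [norm_of_nonneg (by have := hy.1.le; positivity)]
  exact pow_div_one_add_pow_le_one hy.1.le hy.2

theorem integrableOn_Ioi_one_pow_div_one_add_pow (hjk : j + 2 ≤ k) :
    IntegrableOn (fun y : ℝ => y ^ j / (1 + y ^ k)) (Ioi 1) := by
  refine (integrableOn_Ioi_rpow_of_lt (a := -2) (by norm_num) one_pos).mono'
    (by fun_prop : Measurable _).aestronglyMeasurable ?_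
  filter_upwards [ae_restrict_mem measurableSet_Ioi] with y (hy : 1 < y)
  rw [norm_of_nonneg (by have := hy.le; positivity)]
  exact pow_div_one_add_pow_le_rpow_neg_two hjk hy.le

theorem integrableOn_Ioi_pow_div_one_add_pow (hjk : j + 2 ≤ k) :
    IntegrableOn (fun y : ℝ => y ^ j / (1 + y ^ k)) (Ioi 0) := by
  rw [← Ioc_union_Ioi_eq_Ioi zero_le_one]
  exact integrableOn_Ioc_pow_div_one_add_pow.union (integrableOn_Ioi_one_pow_div_one_add_pow hjk)

theorem integral_Ioi_pow_div_one_add_pow_le_two (hjk : j + 2 ≤ k) :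
    ∫ y in Ioi (0 : ℝ), y ^ j / (1 + y ^ k) ≤ 2 := by
  have h₀₁ : ∫ y in Ioc (0 : ℝ) 1, y ^ j / (1 + y ^ k) ≤ 1 := by
    simpa using setIntegral_mono_on integrableOn_Ioc_pow_div_one_add_pow
      (integrableOn_const (by simp)) measurableSet_Ioc
      fun y hy => pow_div_one_add_pow_le_one (j := j) (k := k) hy.1.le hy.2
  have h₁ : ∫ y in Ioi (1 : ℝ), y ^ j / (1 + y ^ k) ≤ 1 := by
    calc _ ≤ ∫ y in Ioi (1 : ℝ), y ^ (-2 : ℝ) :=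
          setIntegral_mono_on (integrableOn_Ioi_one_pow_div_one_add_pow hjk)
            (integrableOn_Ioi_rpow_of_lt (by norm_num) one_pos) measurableSet_Ioi
            fun y hy => pow_div_one_add_pow_le_rpow_neg_two hjk (le_of_lt hy)
      _ = 1 := by rw [integral_Ioi_rpow_of_lt (by norm_num) one_pos]; norm_num
  rw [← Ioc_union_Ioi_eq_Ioi zero_le_one, setIntegral_union (Ioc_disjoint_Ioi le_rfl)
    measurableSet_Ioi integrableOn_Ioc_pow_div_one_add_pow
    (integrableOn_Ioi_one_pow_div_one_add_pow hjk)]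
  linarith
end Radial

theorem norm_pow_mul_norm_le_of_decay {E G : Type*} [NormedAddCommGroup E] [NormedAddCommGroup G]
    {F : E → G} {ρ : ℝ} {m k : ℕ}
    (hdecay : ∀ x, ‖F x‖ * (1 + ‖x‖ ^ k) ≤ ρ) (x : E) :
    ‖x‖ ^ m * ‖F x‖ ≤ ρ * (‖x‖ ^ m / (1 + ‖x‖ ^ k)) := by
  rw [mul_div_assoc', le_div_iff₀ (by positivity), mul_assoc, mul_comm ρ]
  exact mul_le_mul_of_nonneg_left (hdecay x) (by positivity)

section Haar
variable {E : Type*} [NormedAddCommGroup E] [NormedSpace ℝ E] [FiniteDimensional ℝ E]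
  [Nontrivial E] [MeasurableSpace E] [BorelSpace E] (μ : Measure E) [μ.IsAddHaarMeasure]
  {m k : ℕ}

theorem integrable_norm_pow_div_one_add_norm_pow (hk : finrank ℝ E + m + 1 ≤ k) :
    Integrable (fun x : E => ‖x‖ ^ m / (1 + ‖x‖ ^ k)) μ := by
  rw [integrable_fun_norm_addHaar μ (f := fun y => y ^ m / (1 + y ^ k))]
  have hd := finrank_pos (R := ℝ) (M := E)
  refine (integrableOn_Ioi_pow_div_one_add_pow (j := finrank ℝ E - 1 + m) (k := k)
    (by omega)).congr_fun (fun y _ => ?_) measurableSet_Ioi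
  simp only [smul_eq_mul, pow_add, mul_div_assoc]

theorem integral_norm_pow_div_one_add_norm_pow_le (hk : finrank ℝ E + m + 1 ≤ k) :
    ∫ x, ‖x‖ ^ m / (1 + ‖x‖ ^ k) ∂μ ≤ 2 * (finrank ℝ E * μ.real (ball 0 1)) := by
  have hd := finrank_pos (R := ℝ) (M := E)
  have hradial : ∫ y in Ioi (0 : ℝ), y ^ (finrank ℝ E - 1) • (y ^ m / (1 + y ^ k)) ≤ 2 := by
    simp only [smul_eq_mul, ← mul_div_assoc, ← pow_add]
    exact integral_Ioi_pow_div_one_add_pow_le_two (by omega)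
  rw [integral_fun_norm_addHaar μ (fun y => y ^ m / (1 + y ^ k)), nsmul_eq_mul, smul_eq_mul,
    ← mul_assoc, mul_comm 2]
  exact mul_le_mul_of_nonneg_left hradial (by positivity)

theorem integrable_norm_pow_mul_norm_of_decay {G : Type*} [NormedAddCommGroup G] {F : E → G}
    (hF : AEStronglyMeasurable F μ) {ρ : ℝ} (hdecay : ∀ x, ‖F x‖ * (1 + ‖x‖ ^ k) ≤ ρ)
    (hk : finrank ℝ E + m + 1 ≤ k) :
    Integrable (fun x => ‖x‖ ^ m * ‖F x‖) μ := by
  refine ((integrable_norm_pow_div_one_add_norm_pow μ hk).const_mul ρ).mono'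
    ((continuous_norm.pow m).aestronglyMeasurable.mul hF.norm) (Filter.Eventually.of_forall ?_)
  intro x
  rw [norm_of_nonneg (by positivity)]
  exact norm_pow_mul_norm_le_of_decay hdecay x

theorem integral_norm_pow_mul_norm_le_of_decay {G : Type*} [NormedAddCommGroup G] {F : E → G}
    {ρ : ℝ} (hdecay : ∀ x, ‖F x‖ * (1 + ‖x‖ ^ k) ≤ ρ) (hk : finrank ℝ E + m + 1 ≤ k) :
    ∫ x, ‖x‖ ^ m * ‖F x‖ ∂μ ≤ 2 * ρ * (finrank ℝ E * μ.real (ball 0 1)) := by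
  have hρ : 0 ≤ ρ := (by positivity : (0 : ℝ) ≤ _).trans (hdecay 0)
  calc ∫ x, ‖x‖ ^ m * ‖F x‖ ∂μ ≤ ∫ x, ρ * (‖x‖ ^ m / (1 + ‖x‖ ^ k)) ∂μ :=
        integral_mono_of_nonneg (Filter.Eventually.of_forall fun x => by positivity)
          ((integrable_norm_pow_div_one_add_norm_pow μ hk).const_mul ρ)
          (Filter.Eventually.of_forall (norm_pow_mul_norm_le_of_decay hdecay))
    _ = ρ * ∫ x, ‖x‖ ^ m / (1 + ‖x‖ ^ k) ∂μ := integral_const_mul _ _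
    _ ≤ ρ * (2 * (finrank ℝ E * μ.real (ball 0 1))) :=
        mul_le_mul_of_nonneg_left (integral_norm_pow_div_one_add_norm_pow_le μ hk) hρ
    _ = 2 * ρ * (finrank ℝ E * μ.real (ball 0 1)) := by ring

end Haar

/-- `dim V · vol (ball 0 1)` is the area `A_{d-1}` of the unit sphere. -/
theorem InnerProductSpace.finrank_mul_volume_real_ball {V : Type*} [NormedAddCommGroup V]
    [InnerProductSpace ℝ V] [FiniteDimensional ℝ V] [MeasurableSpace V] [BorelSpace V]
    [Nontrivial V] :
    finrank ℝ V * volume.real (ball (0 : V) 1) =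
      2 * π ^ ((finrank ℝ V : ℝ) / 2) / Gamma (finrank ℝ V / 2) := by
  have hd : (0 : ℝ) < finrank ℝ V := by exact_mod_cast finrank_pos
  have hsqrt : √π ^ finrank ℝ V = π ^ ((finrank ℝ V : ℝ) / 2) := by
    rw [sqrt_eq_rpow, ← rpow_natCast, ← rpow_mul pi_nonneg]; ring_nf
  rw [measureReal_def, InnerProductSpace.volume_ball, ENNReal.ofReal_one, one_pow, one_mul,
    ENNReal.toReal_ofReal (by positivity), Gamma_add_one (by positivity), hsqrt]
  have := (Gamma_pos_of_pos (by positivity : (0 : ℝ) < finrank ℝ V / 2)).ne'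
  field_simp

theorem Real.lipschitzWith_fourierChar : LipschitzWith (2 * NNReal.pi) (𝐞 · : ℝ → ℂ) := by
  refine lipschitzWith_of_nnnorm_deriv_le Real.differentiable_fourierChar fun x => ?_
  rw [Real.deriv_fourierChar, ← NNReal.coe_le_coe]
  simp [abs_of_pos Real.pi_pos, Circle.norm_coe]

section FourierInv
variable {V E : Type*} [NormedAddCommGroup V] [InnerProductSpace ℝ V] [FiniteDimensional ℝ V]
  [MeasurableSpace V] [BorelSpace V] [NormedAddCommGroup E] [NormedSpace ℂ E]

theorem norm_fourierInv_le_integral_norm (g : V → E) (x : V) : ‖𝓕⁻ g x‖ ≤ ∫ ω, ‖g ω‖ :=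
  VectorFourier.norm_fourierIntegral_le_integral_norm _ _ _ _ _

theorem lipschitzWith_fourierInv {g : V → E} (hg : Integrable g)
    (hg' : Integrable fun ω => ‖ω‖ * ‖g ω‖) :
    LipschitzWith (Real.toNNReal (2 * π * ∫ ω, ‖ω‖ * ‖g ω‖)) (𝓕⁻ g) := by
  refine LipschitzWith.of_dist_le' fun x y => ?_
  have hint : ∀ x : V, Integrable fun ω => 𝐞 ⟪ω, x⟫ • g ω := fun x => by
    simpa using (Real.fourierIntegral_convergent_iff (-x)).2 hg
  have hdiff : ∀ ω, ‖𝐞 ⟪ω, x⟫ • g ω - 𝐞 ⟪ω, y⟫ • g ω‖ ≤ 2 * π * dist x y * (‖ω‖ * ‖g ω‖) := by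
    intro ω
    rw [Circle.smul_def, Circle.smul_def, ← sub_smul, norm_smul]
    have hchar_sub : ‖(𝐞 ⟪ω, x⟫ : ℂ) - 𝐞 ⟪ω, y⟫‖ ≤ 2 * π * (‖ω‖ * dist x y) := by
      calc _ = dist (𝐞 ⟪ω, x⟫ : ℂ) (𝐞 ⟪ω, y⟫) := (dist_eq_norm _ _).symm
        _ ≤ 2 * π * dist ⟪ω, x⟫ ⟪ω, y⟫ := by
          simpa using Real.lipschitzWith_fourierChar.dist_le_mul ⟪ω, x⟫ ⟪ω, y⟫
        _ ≤ 2 * π * (‖ω‖ * dist x y) := by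
          gcongr
          rw [Real.dist_eq, ← inner_sub_right, dist_eq_norm]
          exact abs_real_inner_le_norm ω (x - y)
    calc _ ≤ 2 * π * (‖ω‖ * dist x y) * ‖g ω‖ := by gcongr
      _ = _ := by ring
  calc dist (𝓕⁻ g x) (𝓕⁻ g y) = ‖∫ ω, 𝐞 ⟪ω, x⟫ • g ω - 𝐞 ⟪ω, y⟫ • g ω‖ := by
        rw [dist_eq_norm, Real.fourierInv_eq, Real.fourierInv_eq, integral_sub (hint x) (hint y)]
    _ ≤ ∫ ω, 2 * π * dist x y * (‖ω‖ * ‖g ω‖) :=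
        norm_integral_le_of_norm_le (hg'.const_mul _) (Filter.Eventually.of_forall hdiff)
    _ = 2 * π * (∫ ω, ‖ω‖ * ‖g ω‖) * dist x y := by rw [integral_const_mul]; ring
end FourierInv

theorem lipschitz_and_sup_bound_of_fourier_decay_general
    (n k : ℕ) (hn : 1 ≤ n) (hk : n + 3 ≤ k) (ρ : ℝ)
    (f : EuclideanSpace ℝ (Fin n) → ℝ)
    (hcont : Continuous f) (hint : Integrable f)
    (hf : ∀ ω, ‖VectorFourier.fourierIntegral Real.fourierChar volume
      (innerₗ (EuclideanSpace ℝ (Fin n))) (fun x => (f x : ℂ)) ω‖ * (1 + ‖ω‖ ^ k) ≤ ρ) :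
    LipschitzWith (Real.toNNReal
        (4 * π * (2 * π ^ ((n : ℝ) / 2) / Real.Gamma (n / 2)) * ρ)) f ∧
      ∀ x, |f x| ≤ 2 * ρ * (2 * π ^ ((n : ℝ) / 2) / Real.Gamma (n / 2)) := by
  have : Nontrivial (EuclideanSpace ℝ (Fin n)) :=
    Module.nontrivial_of_finrank_pos (R := ℝ) (by rw [finrank_euclideanSpace_fin]; omega)
  have hdim : ∀ m ≤ 1, finrank ℝ (EuclideanSpace ℝ (Fin n)) + m + 1 ≤ k := fun m hm => by
    rw [finrank_euclideanSpace_fin]; omega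
  have hball : n * volume.real (ball (0 : EuclideanSpace ℝ (Fin n)) 1) =
      2 * π ^ ((n : ℝ) / 2) / Gamma (n / 2) := by
    simpa using InnerProductSpace.finrank_mul_volume_real_ball (V := EuclideanSpace ℝ (Fin n))
  set F := 𝓕 (fun x => (f x : ℂ))
  have hdecay : ∀ ω, ‖F ω‖ * (1 + ‖ω‖ ^ k) ≤ ρ := hf
  have hFmeas : AEStronglyMeasurable F :=
    (VectorFourier.fourierIntegral_continuous Real.continuous_fourierChar continuous_inner
      hint.ofReal).aestronglyMeasurable
  have hFint : Integrable F := (integrable_norm_iff hFmeas).1 <| by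
    simpa using
      integrable_norm_pow_mul_norm_of_decay volume hFmeas hdecay (m := 0) (hdim 0 zero_le_one)
  have hFint₁ : Integrable fun ω => ‖ω‖ * ‖F ω‖ := by
    simpa using integrable_norm_pow_mul_norm_of_decay volume hFmeas hdecay (hdim 1 le_rfl)
  have hF₀ : ∫ ω, ‖F ω‖ ≤ 2 * ρ * (2 * π ^ ((n : ℝ) / 2) / Gamma (n / 2)) := by
    simpa [hball] using
      integral_norm_pow_mul_norm_le_of_decay volume hdecay (m := 0) (hdim 0 zero_le_one)
  have hF₁ : ∫ ω, ‖ω‖ * ‖F ω‖ ≤ 2 * ρ * (2 * π ^ ((n : ℝ) / 2) / Gamma (n / 2)) := by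
    simpa [hball] using integral_norm_pow_mul_norm_le_of_decay volume hdecay (hdim 1 le_rfl)
  have hinv : 𝓕⁻ F = fun x => (f x : ℂ) :=
    (Complex.continuous_ofReal.comp hcont).fourierInv_fourier_eq hint.ofReal hFint
  constructor
  · have hlip := lipschitzWith_fourierInv hFint hFint₁
    rw [hinv] at hlip
    refine ((Complex.isometry_ofReal.lipschitzWith_iff _).1 hlip).weaken
      (Real.toNNReal_le_toNNReal ?_)
    linarith [mul_le_mul_of_nonneg_left hF₁ two_pi_pos.le]
  · intro x
    simpa [hinv] using (norm_fourierInv_le_integral_norm F x).trans hF₀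

/-- If the Fourier transform of a continuous integrable real-valued `f` satisfies
`|f̂(ω)|(1 + ‖ω‖^k) ≤ ρ` with `k ≥ n + 3`, then `f` is `4π A_{n-1} ρ`-Lipschitz and
`‖f‖_∞ ≤ 2 ρ A_{n-1}`, where `A_{n-1} = 2π^{n/2}/Γ(n/2)`. -/
theorem lipschitz_and_sup_bound_of_fourier_decay
    (n k : ℕ) (hn : 1 ≤ n) (hk : n + 3 ≤ k) (ρ : ℝ) (hρ : 0 < ρ)
    (f : EuclideanSpace ℝ (Fin n) → ℝ)
    (hcont : Continuous f) (hint : Integrable f)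
    (hf : ∀ ω, ‖VectorFourier.fourierIntegral Real.fourierChar volume
      (innerₗ (EuclideanSpace ℝ (Fin n))) (fun x => (f x : ℂ)) ω‖ * (1 + ‖ω‖ ^ k) ≤ ρ) :
    LipschitzWith (Real.toNNReal
        (4 * π * (2 * π ^ ((n : ℝ) / 2) / Real.Gamma (n / 2)) * ρ)) f ∧
      ∀ x, |f x| ≤ 2 * ρ * (2 * π ^ ((n : ℝ) / 2) / Real.Gamma (n / 2)) :=
  lipschitz_and_sup_bound_of_fourier_decay_general n k hn hk ρ f hcont hint hf
end

section
/- Suppose f : ℝⁿ → ℝ is real-valued with f̂ ∈ L¹ and Z := ∫ |f̂(ω)|‖2πω‖² dω < ∞. Then there exist h : S^{n-1} × [−R,R] → ℝ with ‖h‖_∞ ≤ Z, a ∈ ℝⁿ with ‖a‖ ≤ √(‖f̂‖₁ Z), and b ∈ ℝ with |b| ≤ ‖f̂‖₁ + R√(‖f̂‖₁ Z), such that for all ‖x‖ ≤ R: f(x) = ∫_{S^{n-1}} ∫_{−R}^R h(α,t) σ(α^⊤x − t) q(α) dt μ_{n-1}(dα) + a^⊤x + b, where q(α) = ∫_0^∞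 p(rα) r^{n-1} dr and p(ω) = |f̂(ω)|‖2πω‖²/Z. -/
/-!
Fourier inversion writes `f x` as `∫ Re (f̂ ω e^{2πi⟪ω, x⟫}) dω`. For a fixed frequency `ω`, the
plane wave `g u = Re (f̂ ω e^{2πi‖ω‖u})` is expanded by Taylor's formula at `u = -R` with the
remainder written as `∫_{-R}^{R} (u - t)₊ g''(t) dt`, and evaluated at `u = ⟪ω / ‖ω‖, x⟫ ∈ [-R, R]`.
The zeroth- and first-order terms integrate to the affine part `⟪a, x⟫ + b`; their sizes are
controlled by Cauchy–Schwarz, `∫ |f̂| ‖2πω‖ ≤ √(‖f̂‖₁ Z)`. In polar coordinates `ω = r α` the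
remainder becomes `∫_α ∫_t (⟪α, x⟫ - t)₊ Φ(α, t)`, where `Φ(α, t) = ∫_r g''_{rα}(t) r^{n-1} dr`
satisfies `|Φ(α, t)| ≤ Z q(α)` because `|g''_ω| ≤ |f̂ ω| ‖2πω‖²`; so `h = Φ / q` works.
-/

open MeasureTheory Real RealInnerProductSpace Set

noncomputable def sinusoid (z : ℂ) (θ : ℝ) : ℝ := (z * Complex.exp (θ * Complex.I)).re

lemma abs_sinusoid_le (z : ℂ) (θ : ℝ) : |sinusoid z θ| ≤ ‖z‖ :=
  (Complex.abs_re_le_norm _).trans (by rw [norm_mul, Complex.norm_exp_ofReal_mul_I, mul_one])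

lemma sinusoid_mul_I_mul_I (z : ℂ) (θ : ℝ) :
    sinusoid (z * Complex.I * Complex.I) θ = -sinusoid z θ := by
  simp [sinusoid, mul_assoc]

@[fun_prop]
lemma Continuous.sinusoid {X : Type*} [TopologicalSpace X] {f : X → ℂ} {g : X → ℝ}
    (hf : Continuous f) (hg : Continuous g) : Continuous fun x => sinusoid (f x) (g x) := by
  unfold _root_.sinusoid; fun_prop

lemma hasDerivAt_sinusoid_mul (z : ℂ) (c t : ℝ) :
    HasDerivAt (fun t => sinusoid z (c * t)) (c * sinusoid (z * Complex.I) (c * t)) t := by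
  have h : HasDerivAt (fun s : ℂ => z * Complex.exp (c * s * Complex.I))
      (z * (Complex.exp (c * t * Complex.I) * (c * Complex.I))) t :=
    ((((hasDerivAt_id _).const_mul (c : ℂ)).mul_const Complex.I).cexp.const_mul z).congr_deriv
      (by simp)
  convert h.real_of_complex using 1
  · ext s; simp [sinusoid]
  · simp only [sinusoid, Complex.ofReal_mul]
    rw [← Complex.re_ofReal_mul]; ring_nf

theorem taylor_relu_integral_remainder {G : Type*} [NormedAddCommGroup G] [NormedSpace ℝ G]
    [CompleteSpace G] {g g' g'' : ℝ → G} (hg : ∀ t, HasDerivAt g (g' t) t)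
    (hg' : ∀ t, HasDerivAt g' (g'' t) t)
    (hg'' : Continuous g'') {a b u : ℝ} (hau : a ≤ u) (hub : u ≤ b) :
    g u = g a + (u - a) • g' a + ∫ t in a..b, max 0 (u - t) • g'' t := by
  have hcont : Continuous fun t => max 0 (u - t) • g'' t := by fun_prop
  have hFTC : ∫ t in a..u, (u - t) • g'' t = g u - (g a + (u - a) • g' a) := by
    have h := intervalIntegral.integral_eq_sub_of_hasDerivAt (a := a) (b := u)
      (f := fun t => g t + (u - t) • g' t) (f' := fun t => (u - t) • g'' t)
      (fun t _ => by
        convert (hg t).add (((hasDerivAt_id t).const_sub u).smul (hg' t)) using 1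
        · rfl
        · simp)
      ((by fun_prop : Continuous fun t => (u - t) • g'' t).intervalIntegrable _ _)
    simpa using h
  have hleft : ∫ t in a..u, max 0 (u - t) • g'' t = ∫ t in a..u, (u - t) • g'' t :=
    intervalIntegral.integral_congr fun t ht => by
      rw [uIcc_of_le hau] at ht
      rw [max_eq_right (by linarith [ht.2])]
  have hright : ∫ t in u..b, max 0 (u - t) • g'' t = 0 := by
    rw [intervalIntegral.integral_congr (g := fun _ => (0 : G)) fun t ht => ?_,
      intervalIntegral.integral_zero]
    rw [uIcc_of_le hub] at ht
    simp [max_eq_left (by linarith [ht.1] : u - t ≤ 0)]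
  rw [← intervalIntegral.integral_add_adjacent_intervals (hcont.intervalIntegrable a u)
    (hcont.intervalIntegrable u b), hleft, hright, hFTC]
  abel

section Decomposition

variable {E : Type*} [NormedAddCommGroup E] [InnerProductSpace ℝ E]

noncomputable def waveSecondDeriv (F : E → ℂ) (ω : E) (t : ℝ) : ℝ :=
  -‖(2 * π) • ω‖ ^ 2 * sinusoid (F ω) (‖(2 * π) • ω‖ * t)

noncomputable def reluRemainder (F : E → ℂ) (R : ℝ) (x ω : E) : ℝ :=
  ∫ t in (-R)..R, max 0 (⟪‖ω‖⁻¹ • ω, x⟫ - t) * waveSecondDeriv F ω t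

-- With `c = ‖2πω‖` and `g u = sinusoid (F ω) (c * u)`, the first-order Taylor term
-- `(u + R) * g' (-R)` at `u = ⟪ω / ‖ω‖, x⟫` is `⟪linearCoeff F R ω, x⟫` plus the `R`-part of
-- `constCoeff F R ω`.
noncomputable def linearCoeff (F : E → ℂ) (R : ℝ) (ω : E) : E :=
  sinusoid (F ω * Complex.I) (‖(2 * π) • ω‖ * -R) • (2 * π) • ω

noncomputable def constCoeff (F : E → ℂ) (R : ℝ) (ω : E) : ℝ :=
  sinusoid (F ω) (‖(2 * π) • ω‖ * -R)
    + R * (‖(2 * π) • ω‖ * sinusoid (F ω * Complex.I) (‖(2 * π) • ω‖ * -R))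

lemma norm_two_pi_smul (ω : E) : ‖(2 * π) • ω‖ = 2 * π * ‖ω‖ := by
  rw [norm_smul, Real.norm_of_nonneg (by positivity)]

lemma sinusoid_eq_reluRemainder_add (F : E → ℂ) {R : ℝ} {x : E} (hx : ‖x‖ ≤ R) (ω : E) :
    sinusoid (F ω) (2 * π * ⟪ω, x⟫)
      = reluRemainder F R x ω + ⟪linearCoeff F R ω, x⟫ + constCoeff F R ω := by
  set c := ‖(2 * π) • ω‖
  set u := ⟪‖ω‖⁻¹ • ω, x⟫
  have hu : |u| ≤ R := by
    refine (abs_real_inner_le_norm _ _).trans ((mul_le_of_le_one_left (norm_nonneg x) ?_).trans hx)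
    rw [norm_smul, norm_inv, norm_norm]
    exact inv_mul_le_one_of_le₀ le_rfl (norm_nonneg ω)
  have hcu : c * u = 2 * π * ⟪ω, x⟫ := by
    rcases eq_or_ne ω 0 with rfl | hω
    · simp [u]
    · simp only [c, u, norm_two_pi_smul, real_inner_smul_left]
      field_simp
  have htaylor := taylor_relu_integral_remainder (g := fun t => sinusoid (F ω) (c * t))
    (g'' := waveSecondDeriv F ω) (hasDerivAt_sinusoid_mul (F ω) c)
    (fun t => ((hasDerivAt_sinusoid_mul (F ω * Complex.I) c t).const_mul c).congr_deriv
      (by rw [sinusoid_mul_I_mul_I, waveSecondDeriv]; ring))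
    (by unfold waveSecondDeriv; fun_prop) (neg_le_of_abs_le hu) (le_of_abs_le hu)
  have hlin : ⟪linearCoeff F R ω, x⟫ = u * (c * sinusoid (F ω * Complex.I) (c * -R)) := by
    rw [linearCoeff, real_inner_smul_left, real_inner_smul_left, ← hcu]; ring
  simp only [smul_eq_mul] at htaylor
  rw [← hcu, htaylor, hlin, reluRemainder, constCoeff]
  ring

lemma norm_linearCoeff_le (F : E → ℂ) (R : ℝ) (ω : E) :
    ‖linearCoeff F R ω‖ ≤ ‖F ω‖ * ‖(2 * π) • ω‖ := by
  rw [linearCoeff, norm_smul, Real.norm_eq_abs]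
  gcongr
  exact (abs_sinusoid_le _ _).trans (by simp)

lemma abs_constCoeff_le (F : E → ℂ) {R : ℝ} (hR : 0 ≤ R) (ω : E) :
    |constCoeff F R ω| ≤ ‖F ω‖ + R * (‖F ω‖ * ‖(2 * π) • ω‖) := by
  have hI : |sinusoid (F ω * Complex.I) (‖(2 * π) • ω‖ * -R)| ≤ ‖F ω‖ :=
    (abs_sinusoid_le _ _).trans (by simp)
  refine (abs_add_le _ _).trans (add_le_add (abs_sinusoid_le _ _) ?_)
  rw [abs_mul, abs_mul, abs_of_nonneg hR, abs_norm, mul_comm ‖F ω‖]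
  gcongr

lemma abs_waveSecondDeriv_le (F : E → ℂ) (ω : E) (t : ℝ) :
    |waveSecondDeriv F ω t| ≤ ‖F ω‖ * ‖(2 * π) • ω‖ ^ 2 := by
  rw [waveSecondDeriv, abs_mul, abs_neg, abs_of_nonneg (by positivity), mul_comm]
  gcongr
  exact abs_sinusoid_le _ _

end Decomposition

theorem integral_mul_le_sqrt_integral_mul_integral_mul_sq {α : Type*} [MeasurableSpace α]
    {μ : Measure α} {w g : α → ℝ} (hw : 0 ≤ w) (hg : 0 ≤ g) (hgm : AEStronglyMeasurable g μ)
    (hwi : Integrable w μ) (hwg : Integrable (fun a => w a * g a ^ 2) μ) :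
    ∫ a, w a * g a ∂μ ≤ √((∫ a, w a ∂μ) * ∫ a, w a * g a ^ 2 ∂μ) := by
  have hsqrt : AEStronglyMeasurable (fun a => √(w a)) μ :=
    continuous_sqrt.comp_aestronglyMeasurable hwi.aestronglyMeasurable
  have hsq : ∀ a, √(w a) ^ 2 = w a := fun a => sq_sqrt (hw a)
  have h := integral_mul_le_Lp_mul_Lq_of_nonneg (μ := μ) (p := 2) (q := 2)
    Real.HolderConjugate.two_two
    (f := fun a => √(w a)) (g := fun a => √(w a) * g a)
    (.of_forall fun a => sqrt_nonneg _) (.of_forall fun a => mul_nonneg (sqrt_nonneg _) (hg a))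
    (by rw [ENNReal.ofReal_ofNat, memLp_two_iff_integrable_sq hsqrt]; simpa [hsq] using hwi)
    (by
      rw [ENNReal.ofReal_ofNat,
        memLp_two_iff_integrable_sq (f := fun a => √(w a) * g a) (hsqrt.mul hgm)]
      simpa [mul_pow, hsq] using hwg)
  simp only [← mul_assoc, mul_self_sqrt (hw _), rpow_two, mul_pow, hsq] at h
  rwa [← sqrt_eq_rpow, ← sqrt_eq_rpow, ← sqrt_mul (integral_nonneg hw)] at h

section Coefficients

variable {E : Type*} [NormedAddCommGroup E] [InnerProductSpace ℝ E] [FiniteDimensional ℝ E]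
  [MeasurableSpace E] [BorelSpace E] {μ : Measure E} {F : E → ℂ} {R : ℝ}

lemma integrable_norm_mul_norm_two_pi_smul (hF : Integrable F μ)
    (hF2 : Integrable (fun ω => ‖F ω‖ * ‖(2 * π) • ω‖ ^ 2) μ) :
    Integrable (fun ω => ‖F ω‖ * ‖(2 * π) • ω‖) μ := by
  refine (hF.norm.add hF2).mono' (hF.norm.aestronglyMeasurable.mul (by fun_prop))
    (.of_forall fun ω => ?_)
  have h : ‖(2 * π) • ω‖ ≤ 1 + ‖(2 * π) • ω‖ ^ 2 := by nlinarith [sq_nonneg (‖(2 * π) • ω‖ - 1)]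
  rw [norm_mul, norm_norm, norm_norm, Pi.add_apply, ← mul_one_add]
  exact mul_le_mul_of_nonneg_left h (norm_nonneg _)

lemma integrable_linearCoeff (hFc : Continuous F) (hF : Integrable F μ)
    (hF2 : Integrable (fun ω => ‖F ω‖ * ‖(2 * π) • ω‖ ^ 2) μ) :
    Integrable (linearCoeff F R) μ :=
  (integrable_norm_mul_norm_two_pi_smul hF hF2).mono'
    (show Continuous (linearCoeff F R) by unfold linearCoeff; fun_prop).aestronglyMeasurable
    (.of_forall (norm_linearCoeff_le F R))

lemma integrable_constCoeff (hFc : Continuous F) (hR : 0 ≤ R) (hF : Integrable F μ)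
    (hF2 : Integrable (fun ω => ‖F ω‖ * ‖(2 * π) • ω‖ ^ 2) μ) :
    Integrable (constCoeff F R) μ :=
  (hF.norm.add ((integrable_norm_mul_norm_two_pi_smul hF hF2).const_mul R)).mono'
    (show Continuous (constCoeff F R) by unfold constCoeff; fun_prop).aestronglyMeasurable
    (.of_forall fun ω => (Real.norm_eq_abs _).trans_le (abs_constCoeff_le F hR ω))

lemma integral_norm_mul_norm_two_pi_smul_le (hF : Integrable F μ)
    (hF2 : Integrable (fun ω => ‖F ω‖ * ‖(2 * π) • ω‖ ^ 2) μ) :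
    ∫ ω, ‖F ω‖ * ‖(2 * π) • ω‖ ∂μ
      ≤ √((∫ ω, ‖F ω‖ ∂μ) * ∫ ω, ‖F ω‖ * ‖(2 * π) • ω‖ ^ 2 ∂μ) :=
  integral_mul_le_sqrt_integral_mul_integral_mul_sq (fun _ => norm_nonneg _)
    (fun _ => norm_nonneg _) (by fun_prop) hF.norm hF2

lemma norm_integral_linearCoeff_le (hF : Integrable F μ)
    (hF2 : Integrable (fun ω => ‖F ω‖ * ‖(2 * π) • ω‖ ^ 2) μ) :
    ‖∫ ω, linearCoeff F R ω ∂μ‖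
      ≤ √((∫ ω, ‖F ω‖ ∂μ) * ∫ ω, ‖F ω‖ * ‖(2 * π) • ω‖ ^ 2 ∂μ) :=
  (norm_integral_le_of_norm_le (integrable_norm_mul_norm_two_pi_smul hF hF2)
    (.of_forall (norm_linearCoeff_le F R))).trans
    (integral_norm_mul_norm_two_pi_smul_le hF hF2)

lemma abs_integral_constCoeff_le (hR : 0 ≤ R) (hF : Integrable F μ)
    (hF2 : Integrable (fun ω => ‖F ω‖ * ‖(2 * π) • ω‖ ^ 2) μ) :
    |∫ ω, constCoeff F R ω ∂μ|
      ≤ (∫ ω, ‖F ω‖ ∂μ) + R * √((∫ ω, ‖F ω‖ ∂μ) * ∫ ω, ‖F ω‖ * ‖(2 * π) • ω‖ ^ 2 ∂μ) := by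
  have hM := integrable_norm_mul_norm_two_pi_smul hF hF2
  calc |∫ ω, constCoeff F R ω ∂μ|
      ≤ ∫ ω, ‖F ω‖ + R * (‖F ω‖ * ‖(2 * π) • ω‖) ∂μ :=
        norm_integral_le_of_norm_le (hF.norm.add (hM.const_mul R))
          (.of_forall fun ω => (Real.norm_eq_abs _).trans_le (abs_constCoeff_le F hR ω))
    _ = (∫ ω, ‖F ω‖ ∂μ) + R * ∫ ω, ‖F ω‖ * ‖(2 * π) • ω‖ ∂μ := by
        rw [integral_add hF.norm (hM.const_mul R), integral_const_mul]
    _ ≤ _ := by gcongr; exact integral_norm_mul_norm_two_pi_smul_le hF hF2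

end Coefficients

open scoped FourierTransform in
theorem fourier_inversion_sinusoid {V : Type*} [NormedAddCommGroup V] [InnerProductSpace ℝ V]
    [FiniteDimensional ℝ V] [MeasurableSpace V] [BorelSpace V] {f : V → ℝ} (hcont : Continuous f)
    (hf : Integrable f) (hf' : Integrable (𝓕 fun x => (f x : ℂ))) (x : V) :
    f x = ∫ ω, sinusoid (𝓕 (fun x => (f x : ℂ)) ω) (2 * π * ⟪ω, x⟫) := by
  have hinv := (Complex.continuous_ofReal.comp hcont).fourierInv_fourier_eq hf.ofReal hf'
  have hint : Integrable fun ω =>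
      Complex.exp (↑(2 * π * ⟪ω, x⟫) * Complex.I) • 𝓕 (fun x => (f x : ℂ)) ω :=
    hf'.norm.congr' (by fun_prop) (.of_forall fun ω => by
      rw [norm_smul, Complex.norm_exp_ofReal_mul_I, one_mul, norm_norm])
  calc f x = (𝓕⁻ (𝓕 fun x => (f x : ℂ)) x).re := by rw [← Function.comp_def, hinv]; simp
    _ = ∫ ω, sinusoid (𝓕 (fun x => (f x : ℂ)) ω) (2 * π * ⟪ω, x⟫) := by
      rw [Real.fourierInv_eq', ← Complex.reCLM_apply, ← Complex.reCLM.integral_comp_comm hint]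
      simp [sinusoid, mul_comm]

theorem integral_volumeIoiPow {G : Type*} [NormedAddCommGroup G] [NormedSpace ℝ G] (m : ℕ)
    (φ : ℝ → G) :
    ∫ r : Ioi (0 : ℝ), φ r.1 ∂Measure.volumeIoiPow m = ∫ r in Ioi (0 : ℝ), r ^ m • φ r := by
  rw [Measure.volumeIoiPow, integral_withDensity_eq_integral_toReal_smul
      (measurable_subtype_coe.pow_const _).ennreal_ofReal
      (.of_forall fun _ => ENNReal.ofReal_lt_top),
    integral_subtype_comap measurableSet_Ioi fun r => (ENNReal.ofReal (r ^ m)).toReal • φ r]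
  refine setIntegral_congr_fun measurableSet_Ioi fun r hr => ?_
  rw [ENNReal.toReal_ofReal (pow_nonneg (le_of_lt hr) _)]

section Polar

open Metric Module

variable {E : Type*} [NormedAddCommGroup E] [NormedSpace ℝ E] [FiniteDimensional ℝ E]
  [MeasurableSpace E] [BorelSpace E]

theorem measurableEmbedding_smul_sphere :
    MeasurableEmbedding (fun y : sphere (0 : E) 1 × Ioi (0 : ℝ) => y.2.1 • (y.1 : E)) :=
  (MeasurableEmbedding.subtype_coe (measurableSet_singleton (0 : E)).compl).comp
    (homeomorphUnitSphereProd E).toMeasurableEquiv.symm.measurableEmbedding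

variable [Nontrivial E] (μ : Measure E) [μ.IsAddHaarMeasure]

theorem measurePreserving_smul_sphere :
    MeasurePreserving (fun y : sphere (0 : E) 1 × Ioi (0 : ℝ) => y.2.1 • (y.1 : E))
      (μ.toSphere.prod (Measure.volumeIoiPow (finrank ℝ E - 1))) μ := by
  have h := (measurePreserving_subtype_coe (μa := μ) (measurableSet_singleton (0 : E)).compl).comp
    (μ.measurePreserving_homeomorphUnitSphereProd.symm
      (homeomorphUnitSphereProd E).toMeasurableEquiv)
  rwa [restrict_compl_singleton] at h

variable {G : Type*} [NormedAddCommGroup G] {g : E → G}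

theorem ae_integrable_comp_smul_sphere (hg : Integrable g μ) :
    ∀ᵐ α ∂μ.toSphere, Integrable (fun r : Ioi (0 : ℝ) => g (r.1 • α.1))
      (Measure.volumeIoiPow (finrank ℝ E - 1)) :=
  ((measurePreserving_smul_sphere μ).integrable_comp_of_integrable hg).prod_right_ae

theorem integral_eq_integral_toSphere_volumeIoiPow [NormedSpace ℝ G] (hg : Integrable g μ) :
    ∫ x, g x ∂μ = ∫ α, ∫ r : Ioi (0 : ℝ), g (r.1 • α.1)
      ∂Measure.volumeIoiPow (finrank ℝ E - 1) ∂μ.toSphere := by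
  rw [← (measurePreserving_smul_sphere μ).integral_comp measurableEmbedding_smul_sphere]
  exact integral_prod _ ((measurePreserving_smul_sphere μ).integrable_comp_of_integrable hg)

end Polar

theorem integral_intervalIntegral_mul_comm {X : Type*} [TopologicalSpace X] [MeasurableSpace X]
    [OpensMeasurableSpace X] {ν : Measure X} [SFinite ν] {k : X → ℝ → ℝ} {m : X → ℝ}
    {φ : ℝ → ℝ} {a b : ℝ} (hφ : Continuous φ) (hk : Continuous (Function.uncurry k))
    (hm : Integrable m ν) (hkm : ∀ r t, |k r t| ≤ m r) :
    ∫ r, (∫ t in a..b, φ t * k r t) ∂ν = ∫ t in a..b, φ t * ∫ r, k r t ∂ν := by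
  obtain ⟨C, hC⟩ := (isCompact_uIcc (a := a) (b := b)).exists_bound_of_continuousOn
    hφ.continuousOn
  have hC' : Integrable (fun _ : ℝ => C) (volume.restrict (uIoc a b)) :=
    integrableOn_const measure_Ioc_lt_top.ne
  have hdom : Integrable (fun z : ℝ × X => C * m z.2) ((volume.restrict (uIoc a b)).prod ν) :=
    hC'.mul_prod hm
  have hmeas : AEStronglyMeasurable (Function.uncurry fun t r => φ t * k r t)
      ((volume.restrict (uIoc a b)).prod ν) :=
    (hφ.comp continuous_fst).mul (hk.comp continuous_swap) |>.aestronglyMeasurable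
  have hint : Integrable (Function.uncurry fun t r => φ t * k r t)
      ((volume.restrict (uIoc a b)).prod ν) := by
    refine hdom.mono' hmeas ?_
    filter_upwards [Measure.quasiMeasurePreserving_fst.ae (ae_restrict_mem measurableSet_uIoc)]
      with z hz
    have hφz := hC z.1 (uIoc_subset_uIcc hz)
    rw [Function.uncurry_apply_pair, norm_mul, Real.norm_eq_abs (k _ _)]
    exact mul_le_mul hφz (hkm _ _) (abs_nonneg _) ((norm_nonneg _).trans hφz)
  rw [← intervalIntegral_integral_swap hint]
  simp only [integral_const_mul]

section Spherical

open Metric Module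

variable {E : Type*} [NormedAddCommGroup E] [InnerProductSpace ℝ E]
  {F : E → ℂ} {α : sphere (0 : E) 1}

noncomputable def sphericalProfile (F : E → ℂ) (α : sphere (0 : E) 1) (t : ℝ) : ℝ :=
  ∫ r : Ioi (0 : ℝ), waveSecondDeriv F (r.1 • α.1) t ∂Measure.volumeIoiPow (finrank ℝ E - 1)

noncomputable def sphericalMoment (F : E → ℂ) (α : sphere (0 : E) 1) : ℝ :=
  ∫ r : Ioi (0 : ℝ), ‖F (r.1 • α.1)‖ * ‖(2 * π) • (r.1 • α.1)‖ ^ 2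
    ∂Measure.volumeIoiPow (finrank ℝ E - 1)

lemma abs_sphericalProfile_le (hα : Integrable (fun r : Ioi (0 : ℝ) =>
      ‖F (r.1 • α.1)‖ * ‖(2 * π) • (r.1 • α.1)‖ ^ 2) (Measure.volumeIoiPow (finrank ℝ E - 1)))
    (t : ℝ) : |sphericalProfile F α t| ≤ sphericalMoment F α :=
  (Real.norm_eq_abs _).symm.trans_le <|
    norm_integral_le_of_norm_le hα (.of_forall fun _ => abs_waveSecondDeriv_le F _ t)

lemma abs_sphericalProfile_div_le (F : E → ℂ) (α : sphere (0 : E) 1) (t : ℝ) {Z : ℝ}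
    (hZ : 0 < Z) : |sphericalProfile F α t / (sphericalMoment F α / Z)| ≤ Z := by
  by_cases hM : sphericalMoment F α = 0
  · simp [hM, hZ.le]
  -- a non-integrable slice would have the junk integral `0`
  have hα : Integrable (fun r : Ioi (0 : ℝ) => ‖F (r.1 • α.1)‖ * ‖(2 * π) • (r.1 • α.1)‖ ^ 2)
      (Measure.volumeIoiPow (finrank ℝ E - 1)) := by
    by_contra h
    exact hM (integral_undef h)
  have hMpos : 0 < sphericalMoment F α :=
    (integral_nonneg fun r => by positivity).lt_of_ne' hM
  rw [abs_div, abs_of_pos (div_pos hMpos hZ), div_le_iff₀ (div_pos hMpos hZ),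
    mul_div_cancel₀ _ hZ.ne']
  exact abs_sphericalProfile_le hα t

lemma sphericalProfile_div_mul_cancel (hα : Integrable (fun r : Ioi (0 : ℝ) =>
      ‖F (r.1 • α.1)‖ * ‖(2 * π) • (r.1 • α.1)‖ ^ 2) (Measure.volumeIoiPow (finrank ℝ E - 1)))
    (t : ℝ) {Z : ℝ} (hZ : Z ≠ 0) :
    sphericalProfile F α t / (sphericalMoment F α / Z) * (sphericalMoment F α / Z)
      = sphericalProfile F α t := by
  by_cases hM : sphericalMoment F α = 0
  · have h := abs_sphericalProfile_le hα t
    rw [hM] at h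
    simp [hM, abs_nonpos_iff.1 h]
  · exact div_mul_cancel₀ _ (div_ne_zero hM hZ)

lemma reluRemainder_smul_sphere (F : E → ℂ) (R : ℝ) (x : E) (α : sphere (0 : E) 1) {r : ℝ}
    (hr : 0 < r) :
    reluRemainder F R x (r • α.1)
      = ∫ t in (-R)..R, max 0 (⟪α.1, x⟫ - t) * waveSecondDeriv F (r • α.1) t := by
  rw [reluRemainder, norm_smul, norm_eq_of_mem_sphere α, mul_one, Real.norm_of_nonneg hr.le,
    inv_smul_smul₀ hr.ne']

lemma integral_reluRemainder_smul_sphere (hFc : Continuous F) (R : ℝ) (x : E)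
    (hα : Integrable (fun r : Ioi (0 : ℝ) =>
      ‖F (r.1 • α.1)‖ * ‖(2 * π) • (r.1 • α.1)‖ ^ 2) (Measure.volumeIoiPow (finrank ℝ E - 1))) :
    ∫ r : Ioi (0 : ℝ), reluRemainder F R x (r.1 • α.1) ∂Measure.volumeIoiPow (finrank ℝ E - 1)
      = ∫ t in (-R)..R, max 0 (⟪α.1, x⟫ - t) * sphericalProfile F α t := by
  rw [integral_congr_ae (.of_forall fun r => reluRemainder_smul_sphere F R x α r.2)]
  exact integral_intervalIntegral_mul_comm (by fun_prop)
    (by unfold waveSecondDeriv Function.uncurry; fun_prop) hα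
    (fun r t => abs_waveSecondDeriv_le F _ t)

end Spherical

section Representation

open Metric

variable {E : Type*} [NormedAddCommGroup E] [InnerProductSpace ℝ E] [FiniteDimensional ℝ E]
  [MeasurableSpace E] [BorelSpace E] [Nontrivial E] {μ : Measure E} [μ.IsAddHaarMeasure]
  {F : E → ℂ} {R : ℝ} {x : E}

theorem integral_sinusoid_eq_relu_add_affine (hFc : Continuous F) (hF : Integrable F μ)
    (hF2 : Integrable (fun ω => ‖F ω‖ * ‖(2 * π) • ω‖ ^ 2) μ) (hx : ‖x‖ ≤ R) :
    ∫ ω, sinusoid (F ω) (2 * π * ⟪ω, x⟫) ∂μ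
      = (∫ α, (∫ t in (-R)..R, max 0 (⟪α.1, x⟫ - t) * sphericalProfile F α t) ∂μ.toSphere)
        + ⟪∫ ω, linearCoeff F R ω ∂μ, x⟫ + ∫ ω, constCoeff F R ω ∂μ := by
  have hlin₀ := integrable_linearCoeff (R := R) hFc hF hF2
  have hlin := hlin₀.inner_const (𝕜 := ℝ) x
  have hconst := integrable_constCoeff hFc ((norm_nonneg x).trans hx) hF hF2
  have hsin : Integrable (fun ω => sinusoid (F ω) (2 * π * ⟪ω, x⟫)) μ :=
    hF.norm.mono' (by fun_prop) (.of_forall fun ω => abs_sinusoid_le _ _)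
  have hdecomp := sinusoid_eq_reluRemainder_add F hx
  have hrem : Integrable (reluRemainder F R x) μ := by
    refine ((hsin.sub hlin).sub hconst).congr (.of_forall fun ω => ?_)
    simp only [Pi.sub_apply, hdecomp ω]
    ring
  have hremlin : Integrable (fun ω => reluRemainder F R x ω + ⟪linearCoeff F R ω, x⟫) μ :=
    hrem.add hlin
  rw [integral_congr_ae (.of_forall hdecomp), integral_add hremlin hconst,
    integral_add hrem hlin, integral_eq_integral_toSphere_volumeIoiPow μ hrem]
  have hinner : ∫ ω, ⟪linearCoeff F R ω, x⟫ ∂μ = ⟪∫ ω, linearCoeff F R ω ∂μ, x⟫ := by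
    simpa only [real_inner_comm x] using integral_inner (𝕜 := ℝ) hlin₀ x
  rw [hinner]
  congr 2
  refine integral_congr_ae ?_
  filter_upwards [ae_integrable_comp_smul_sphere μ hF2] with α hα
  exact integral_reluRemainder_smul_sphere hFc R x hα

end Representation

/-- ReLU integral representation (Lemma 1): a real-valued `f` with integrable Fourier
transform and finite second Fourier moment `Z` can be written, on the ball of radius `R`, as
`f(x) = ∫_{S^{n-1}} ∫_{-R}^R h(α,t) σ(α⊤x − t) q(α) dt μ_{n-1}(dα) + a⊤x + b`,
with `‖h‖_∞ ≤ Z`, `‖a‖ ≤ √(‖f̂‖₁ Z)`, `|b| ≤ ‖f̂‖₁ + R√(‖f̂‖₁ Z)`, where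
`p(ω) = |f̂(ω)|‖2πω‖²/Z` and `q(α) = ∫_0^∞ p(rα) r^{n-1} dr`, and `μ_{n-1}` is the
surface measure on the unit sphere. -/
theorem relu_integral_representation_lemma
    (n : ℕ) (hn : 1 ≤ n) (R : ℝ) (hR : 0 < R)
    (f : EuclideanSpace ℝ (Fin n) → ℝ) (hcont : Continuous f) (hfint : Integrable f)
    (fhat : EuclideanSpace ℝ (Fin n) → ℂ)
    (hfhat : fhat = FourierTransform.fourier (fun x => (f x : ℂ)))
    (hfhat_int : Integrable fhat)
    (hZ_int : Integrable (fun ω => ‖fhat ω‖ * ‖(2 * π) • ω‖ ^ 2))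
    (Z F1 : ℝ) (hZ : Z = ∫ ω, ‖fhat ω‖ * ‖(2 * π) • ω‖ ^ 2) (hZpos : 0 < Z)
    (hF1 : F1 = ∫ ω, ‖fhat ω‖)
    (p : EuclideanSpace ℝ (Fin n) → ℝ) (hp : p = fun ω => ‖fhat ω‖ * ‖(2 * π) • ω‖ ^ 2 / Z)
    (q : Metric.sphere (0 : EuclideanSpace ℝ (Fin n)) 1 → ℝ)
    (hq : q = fun α => ∫ r in Set.Ioi (0:ℝ), p (r • Subtype.val α) * r ^ (n - 1)) :
    ∃ (h : Metric.sphere (0 : EuclideanSpace ℝ (Fin n)) 1 → ℝ → ℝ)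
      (a : EuclideanSpace ℝ (Fin n)) (b : ℝ),
      (∀ α t, t ∈ Set.Icc (-R) R → |h α t| ≤ Z) ∧
      ‖a‖ ≤ Real.sqrt (F1 * Z) ∧
      |b| ≤ F1 + R * Real.sqrt (F1 * Z) ∧
      ∀ x : EuclideanSpace ℝ (Fin n), ‖x‖ ≤ R →
        f x = (∫ α, (∫ t in (-R)..R,
                h α t * max 0 (⟪(α : EuclideanSpace ℝ (Fin n)), x⟫ - t)) * q α
              ∂(volume : Measure (EuclideanSpace ℝ (Fin n))).toSphere)
            + ⟪a, x⟫ + b := by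
  have : Nontrivial (EuclideanSpace ℝ (Fin n)) :=
    Module.nontrivial_of_finrank_pos (R := ℝ) (by simp; omega)
  have hfhat_cont : Continuous fhat := hfhat ▸
    VectorFourier.fourierIntegral_continuous Real.continuous_fourierChar continuous_inner
      hfint.ofReal
  have hq_eq : ∀ α, q α = sphericalMoment fhat α / Z := fun α => by
    rw [hq, hp, sphericalMoment, integral_volumeIoiPow _
      (fun r => ‖fhat (r • α.1)‖ * ‖(2 * π) • (r • α.1)‖ ^ 2), finrank_euclideanSpace_fin,
      ← integral_div]
    refine integral_congr_ae (.of_forall fun r => ?_)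
    simp only [smul_eq_mul]; ring
  subst hZ hF1
  -- where `q α = 0`, the convention `x / 0 = 0` makes `h α = 0`
  refine ⟨fun α t => sphericalProfile fhat α t / q α, ∫ ω, linearCoeff fhat R ω,
    ∫ ω, constCoeff fhat R ω, fun α t _ => by
      dsimp only; rw [hq_eq]; exact abs_sphericalProfile_div_le fhat α t hZpos,
    norm_integral_linearCoeff_le hfhat_int hZ_int,
    abs_integral_constCoeff_le hR.le hfhat_int hZ_int, fun x hx => ?_⟩
  have hinv := fourier_inversion_sinusoid hcont hfint (hfhat ▸ hfhat_int) x
  rw [← hfhat] at hinv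
  rw [hinv, integral_sinusoid_eq_relu_add_affine hfhat_cont hfhat_int hZ_int hx]
  congr 2
  refine integral_congr_ae ?_
  filter_upwards [ae_integrable_comp_smul_sphere volume hZ_int] with α hα
  rw [← intervalIntegral.integral_mul_const]
  congr 1 with t
  rw [hq_eq, mul_right_comm, sphericalProfile_div_mul_cancel hα t hZpos.ne', mul_comm]
end
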